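/- arXiv:1804.02167 — 4 statements merged into one kernel-verified Lean document; each statement's English description precedes it below -/
import Mathlib

section
/- The standard Gaussian cumulative distribution function Φ(d) = (1/√(2π)) ∫_{-∞}^d e^{-u²/2} du is log-concave on ℝ. -/
/-!
With `F' = f = exp (-x²/2)` and `f' = -x f`, one has `(log F)'' = (f' F - f²) / F²`, so
log-concavity of `F` amounts to `-x F(x) ≤ f(x)`. This holds because `-x ≤ -u` for `u ≤ x`
and `∫_{-∞}^x -u exp (-u²/2) du = exp (-x²/2)`.
-/

open Real MeasureTheory Set Filter Topology

theorem hasDerivAt_integral_Iic {E : Type*} [NormedAddCommGroup E] [NormedSpace ℝ E]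
    [CompleteSpace E] {f : ℝ → E} (hf : Integrable f) {x : ℝ} (hx : ContinuousAt f x) :
    HasDerivAt (fun y => ∫ t in Iic y, f t) (f x) x := by
  have hsplit : (fun y => ∫ t in Iic y, f t) =
      fun y => (∫ t in Iic 0, f t) + ∫ t in (0 : ℝ)..y, f t := by
    funext y
    exact eq_add_of_sub_eq' (intervalIntegral.integral_Iic_sub_Iic hf.integrableOn hf.integrableOn)
  rw [hsplit]
  exact (intervalIntegral.integral_hasDerivAt_right hf.intervalIntegrable
    hf.aestronglyMeasurable.stronglyMeasurableAtFilter hx).const_add _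

theorem concaveOn_log_of_hasDerivAt_of_mul_le_sq {F f f' : ℝ → ℝ}
    (hF : ∀ x, HasDerivAt F (f x) x) (hf : ∀ x, HasDerivAt f (f' x) x) (hpos : ∀ x, 0 < F x)
    (hle : ∀ x, f' x * F x ≤ f x ^ 2) : ConcaveOn ℝ univ (fun x => log (F x)) := by
  have hlog (x : ℝ) : HasDerivAt (fun x => log (F x)) (f x / F x) x :=
    (hF x).log (hpos x).ne'
  refine concaveOn_of_hasDerivWithinAt2_nonpos convex_univ
    (f'' := fun x => (f' x * F x - f x * f x) / F x ^ 2)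
    (fun x _ => (hlog x).continuousAt.continuousWithinAt)
    (fun x _ => (hlog x).hasDerivWithinAt)
    (fun x _ => ((hf x).div (hF x) (hpos x).ne').hasDerivWithinAt) fun x _ => ?_
  exact div_nonpos_of_nonpos_of_nonneg (by linarith [hle x, sq (f x)]) (sq_nonneg _)

noncomputable def gaussWeight (u : ℝ) : ℝ := exp (-u ^ 2 / 2)

/-- Unnormalized: the standard Gaussian CDF is `gaussCDF / √(2π)`. -/
noncomputable def gaussCDF (x : ℝ) : ℝ := ∫ u in Iic x, gaussWeight u

lemma gaussWeight_pos (u : ℝ) : 0 < gaussWeight u := exp_pos _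

lemma gaussWeight_eq : gaussWeight = fun u => exp (-(1 / 2) * u ^ 2) := by
  funext u
  rw [gaussWeight]
  ring_nf

lemma integrable_gaussWeight : Integrable gaussWeight := by
  rw [gaussWeight_eq]
  exact integrable_exp_neg_mul_sq (by norm_num)

lemma integrable_neg_mul_gaussWeight : Integrable fun u => -u * gaussWeight u := by
  rw [gaussWeight_eq]
  exact (integrable_mul_exp_neg_mul_sq (by norm_num)).neg.congr
    (.of_forall fun u => (neg_mul u _).symm)

lemma hasDerivAt_gaussWeight (x : ℝ) : HasDerivAt gaussWeight (-x * gaussWeight x) x := by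
  refine (((hasDerivAt_pow 2 x).neg.div_const 2).exp).congr_deriv ?_
  simp only [gaussWeight, Pi.neg_apply, Nat.cast_ofNat]
  ring

lemma integral_Iic_neg_mul_gaussWeight (x : ℝ) :
    ∫ u in Iic x, -u * gaussWeight u = gaussWeight x := by
  have hderiv (u : ℝ) (_ : u ∈ Iic x) := hasDerivAt_gaussWeight u
  have hlim : Tendsto gaussWeight atBot (𝓝 0) :=
    tendsto_zero_of_hasDerivAt_of_integrableOn_Iic hderiv
      integrable_neg_mul_gaussWeight.integrableOn integrable_gaussWeight.integrableOn
  rw [integral_Iic_of_hasDerivAt_of_tendsto' hderiv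
    integrable_neg_mul_gaussWeight.integrableOn hlim, sub_zero]

lemma gaussCDF_pos (x : ℝ) : 0 < gaussCDF x := by
  refine (setIntegral_pos_iff_support_of_nonneg_ae
    (.of_forall fun u => (gaussWeight_pos u).le) integrable_gaussWeight.integrableOn).2 ?_
  rw [Function.support_eq_univ fun u => (gaussWeight_pos u).ne', univ_inter, volume_Iic]
  exact ENNReal.zero_lt_top

lemma hasDerivAt_gaussCDF (x : ℝ) : HasDerivAt gaussCDF (gaussWeight x) x :=
  hasDerivAt_integral_Iic integrable_gaussWeight (hasDerivAt_gaussWeight x).continuousAt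

/-- Mills' ratio bound `F(x) ≤ f(x) / |x|` for `x < 0`, in a form valid for all `x`. -/
lemma neg_mul_gaussCDF_le (x : ℝ) : -x * gaussCDF x ≤ gaussWeight x :=
  calc -x * gaussCDF x = ∫ u in Iic x, -x * gaussWeight u := (integral_const_mul _ _).symm
    _ ≤ ∫ u in Iic x, -u * gaussWeight u := by
      refine setIntegral_mono_on (integrable_gaussWeight.const_mul _).integrableOn
        integrable_neg_mul_gaussWeight.integrableOn measurableSet_Iic fun u hu => ?_
      exact mul_le_mul_of_nonneg_right (neg_le_neg hu) (gaussWeight_pos u).le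
    _ = gaussWeight x := integral_Iic_neg_mul_gaussWeight x

lemma concaveOn_log_gaussCDF : ConcaveOn ℝ univ fun x => log (gaussCDF x) :=
  concaveOn_log_of_hasDerivAt_of_mul_le_sq hasDerivAt_gaussCDF hasDerivAt_gaussWeight gaussCDF_pos
    fun x => by nlinarith [neg_mul_gaussCDF_le x, gaussWeight_pos x]

/-- The standard Gaussian CDF is log-concave: it is everywhere positive and its
logarithm is concave on ℝ. -/
theorem gaussian_cdf_log_concave
    (Φ : ℝ → ℝ)
    (hΦ : ∀ d, Φ d = (Real.sqrt (2 * Real.pi))⁻¹ * ∫ u in Set.Iic d, Real.exp (-u ^ 2 / 2)) :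
    (∀ d, 0 < Φ d) ∧ ConcaveOn ℝ Set.univ (fun d => Real.log (Φ d)) := by
  have hc : 0 < (√(2 * π))⁻¹ := by positivity
  obtain rfl : Φ = fun d => (√(2 * π))⁻¹ * gaussCDF d := funext hΦ
  refine ⟨fun d => mul_pos hc (gaussCDF_pos d), ?_⟩
  simp_rw [mul_comm _ (gaussCDF _), log_mul (gaussCDF_pos _).ne' hc.ne']
  exact concaveOn_log_gaussCDF.add_const _
end

section
/- For every r > 0, the function d ↦ (1/√(2πr)) ∫_d^∞ e^{-u²/(2r)} du is log-concave on ℝ. -/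
/-! The tail `G(d) = ∫_d^∞ g` of `g(u) = exp(-u²/(2r))` satisfies `G' = -g`, so
`(log G)' = -g/G` and log-concavity amounts to the hazard rate `g/G` being nondecreasing.
Its derivative is `g (g - (d/r) G) / G²`, nonnegative by the Mills-ratio bound `d G(d) ≤ r g(d)`,
which for `d > 0` follows from `G(d) ≤ ∫_d^∞ (u/d) g(u) du = (r/d) g(d)`. -/

open MeasureTheory Set Filter Real

theorem hasDerivAt_integral_Ioi {E : Type*} [NormedAddCommGroup E] [NormedSpace ℝ E]
    [CompleteSpace E] {f : ℝ → E} (hf : Integrable f) {d : ℝ} (hfd : ContinuousAt f d) :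
    HasDerivAt (fun x => ∫ u in Ioi x, f u) (-f d) d := by
  have hint : HasDerivAt (fun x => (∫ u in Ioi 0, f u) - ∫ u in (0 : ℝ)..x, f u) (-f d) d := by
    simpa using (intervalIntegral.integral_hasDerivAt_right hf.intervalIntegrable
      hf.aestronglyMeasurable.stronglyMeasurableAtFilter hfd).const_sub (∫ u in Ioi 0, f u)
  refine hint.congr_of_eventuallyEq (Eventually.of_forall fun x => ?_)
  simp only [← intervalIntegral.integral_Ioi_sub_Ioi' hf.integrableOn hf.integrableOn,
    sub_sub_cancel]

theorem hasDerivAt_exp_neg_sq_div (r u : ℝ) :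
    HasDerivAt (fun u => exp (-u ^ 2 / (2 * r))) (-(u / r) * exp (-u ^ 2 / (2 * r))) u := by
  have h : HasDerivAt (fun u : ℝ => -u ^ 2 / (2 * r)) (-(2 * u) / (2 * r)) u := by
    simpa using ((hasDerivAt_pow 2 u).neg.div_const (2 * r))
  refine h.exp.congr_deriv ?_
  rw [mul_comm, neg_div, mul_div_mul_left _ _ two_ne_zero, neg_div]

theorem concaveOn_log_of_hasDerivAt_of_monotone {G g : ℝ → ℝ} (hpos : ∀ x, 0 < G x)
    (hG : ∀ x, HasDerivAt G (-g x) x) (hmono : Monotone fun x => g x / G x) :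
    ConcaveOn ℝ univ fun x => log (G x) := by
  have hlog := fun x => (hG x).log (hpos x).ne'
  refine Antitone.concaveOn_univ_of_deriv (fun x => (hlog x).differentiableAt) fun x y hxy => ?_
  simp only [(hlog _).deriv, neg_div, neg_le_neg_iff]
  exact hmono hxy

section

variable {r : ℝ}

theorem integrable_exp_neg_sq_div (hr : 0 < r) : Integrable fun u => exp (-u ^ 2 / (2 * r)) := by
  convert integrable_exp_neg_mul_sq (b := (2 * r)⁻¹) (by positivity) using 3
  ring

theorem integrable_mul_exp_neg_sq_div (hr : 0 < r) :
    Integrable fun u => u * exp (-u ^ 2 / (2 * r)) := by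
  convert integrable_mul_exp_neg_mul_sq (b := (2 * r)⁻¹) (by positivity) using 4
  ring

theorem integral_Ioi_mul_exp_neg_sq_div (hr : 0 < r) (d : ℝ) :
    ∫ u in Ioi d, u * exp (-u ^ 2 / (2 * r)) = r * exp (-d ^ 2 / (2 * r)) := by
  have hderiv : ∀ u ∈ Ici d, HasDerivAt (fun u => -(r * exp (-u ^ 2 / (2 * r))))
      (u * exp (-u ^ 2 / (2 * r))) u := fun u _ => by
    refine ((hasDerivAt_exp_neg_sq_div r u).const_mul r).neg.congr_deriv ?_
    rw [neg_mul, mul_neg, neg_neg, ← mul_assoc, mul_div_cancel₀ _ hr.ne']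
  have hlim : Tendsto (fun u => -(r * exp (-u ^ 2 / (2 * r)))) atTop (nhds 0) := by
    have h : Tendsto (fun u : ℝ => -u ^ 2 / (2 * r)) atTop atBot := by
      simp_rw [neg_div]
      exact tendsto_neg_atTop_atBot.comp
        ((tendsto_pow_atTop two_ne_zero).atTop_div_const (by positivity))
    simpa using ((tendsto_exp_atBot.comp h).const_mul r).neg
  rw [integral_Ioi_of_hasDerivAt_of_tendsto' hderiv
    (integrable_mul_exp_neg_sq_div hr).integrableOn hlim]
  ring

noncomputable def gaussianTail (r d : ℝ) : ℝ := ∫ u in Ioi d, exp (-u ^ 2 / (2 * r))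

theorem gaussianTail_pos (hr : 0 < r) (d : ℝ) : 0 < gaussianTail r d := by
  have : NeZero (volume.restrict (Ioi d)) := ⟨by simp⟩
  exact integral_exp_pos (integrable_exp_neg_sq_div hr).integrableOn

theorem hasDerivAt_gaussianTail (hr : 0 < r) (d : ℝ) :
    HasDerivAt (gaussianTail r) (-exp (-d ^ 2 / (2 * r))) d :=
  hasDerivAt_integral_Ioi (integrable_exp_neg_sq_div hr) (by fun_prop)

theorem mul_gaussianTail_le (hr : 0 < r) (d : ℝ) :
    d * gaussianTail r d ≤ r * exp (-d ^ 2 / (2 * r)) := by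
  rcases le_or_gt d 0 with hd | hd
  · exact (mul_nonpos_of_nonpos_of_nonneg hd (gaussianTail_pos hr d).le).trans (by positivity)
  rw [← integral_Ioi_mul_exp_neg_sq_div hr, gaussianTail, ← integral_const_mul]
  exact setIntegral_mono_on ((integrable_exp_neg_sq_div hr).integrableOn.const_mul d)
    (integrable_mul_exp_neg_sq_div hr).integrableOn measurableSet_Ioi
    fun u hu => mul_le_mul_of_nonneg_right (le_of_lt hu) (exp_pos _).le

theorem monotone_exp_div_gaussianTail (hr : 0 < r) :
    Monotone fun d => exp (-d ^ 2 / (2 * r)) / gaussianTail r d := by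
  set g := fun d => exp (-d ^ 2 / (2 * r))
  have hderiv (d : ℝ) : HasDerivAt (fun d => g d / gaussianTail r d)
      (g d * (g d - d / r * gaussianTail r d) / gaussianTail r d ^ 2) d := by
    refine ((hasDerivAt_exp_neg_sq_div r d).div (hasDerivAt_gaussianTail hr d)
      (gaussianTail_pos hr d).ne').congr_deriv ?_
    ring
  refine monotone_of_deriv_nonneg (fun d => (hderiv d).differentiableAt) fun d => ?_
  have hmills : d / r * gaussianTail r d ≤ g d := by
    rw [div_mul_eq_mul_div, div_le_iff₀' hr]
    exact mul_gaussianTail_le hr d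
  rw [(hderiv d).deriv]
  exact div_nonneg (mul_nonneg (exp_pos _).le (sub_nonneg.2 hmills)) (sq_nonneg _)

theorem concaveOn_log_gaussianTail (hr : 0 < r) :
    ConcaveOn ℝ univ fun d => log (gaussianTail r d) :=
  concaveOn_log_of_hasDerivAt_of_monotone (gaussianTail_pos hr) (hasDerivAt_gaussianTail hr)
    (monotone_exp_div_gaussianTail hr)

end

/-- The complementary CDF of a centered Gaussian with variance `r > 0` is
log-concave: positive, with concave logarithm. -/
theorem gaussian_ccdf_var_log_concave (r : ℝ) (hr : 0 < r)
    (F : ℝ → ℝ)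
    (hF : ∀ d, F d = (Real.sqrt (2 * Real.pi * r))⁻¹ *
      ∫ u in Set.Ioi d, Real.exp (-u ^ 2 / (2 * r))) :
    (∀ d, 0 < F d) ∧ ConcaveOn ℝ Set.univ (fun d => Real.log (F d)) := by
  set c := (Real.sqrt (2 * Real.pi * r))⁻¹
  have hc : 0 < c := by positivity
  obtain rfl : F = fun d => c * gaussianTail r d := funext hF
  refine ⟨fun d => mul_pos hc (gaussianTail_pos hr d), ?_⟩
  refine ((concaveOn_const (log c) convex_univ).add (concaveOn_log_gaussianTail hr)).congr ?_
  intro d _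
  exact (log_mul hc.ne' (gaussianTail_pos hr d).ne').symm
end

section
/- For any τ ∈ ℝ, r > 0, and linear functional C on ℝⁿ, the function x ↦ -ln Φ((τ - C x)/√r) is convex on ℝⁿ, where Φ is the standard Gaussian CDF. -/
open Real MeasureTheory Set Filter

noncomputable def psiG (d : ℝ) : ℝ := ∫ u in Set.Iic d, Real.exp (-u ^ 2 / 2)

lemma dens_integrable : Integrable (fun u : ℝ => Real.exp (-u ^ 2 / 2)) := by
  have h := integrable_exp_neg_mul_sq (b := (1:ℝ)/2) (by norm_num)
  convert h using 2 with u
  ring_nf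

lemma dens_continuous : Continuous (fun u : ℝ => Real.exp (-u ^ 2 / 2)) := by
  continuity

lemma psiG_pos (d : ℝ) : 0 < psiG d := by
  have hsub : psiG d - psiG (d - 1) = ∫ u in (d-1)..d, Real.exp (-u ^ 2 / 2) :=
    intervalIntegral.integral_Iic_sub_Iic dens_integrable.integrableOn dens_integrable.integrableOn
  have hpos : 0 < ∫ u in (d-1)..d, Real.exp (-u ^ 2 / 2) := by
    apply intervalIntegral.intervalIntegral_pos_of_pos
    · exact dens_integrable.intervalIntegrable
    · intro x; positivity
    · linarith
  have hnn : 0 ≤ psiG (d - 1) :=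
    setIntegral_nonneg measurableSet_Iic (fun u _ => (Real.exp_pos _).le)
  linarith

lemma psiG_hasDerivAt (d : ℝ) : HasDerivAt psiG (Real.exp (-d ^ 2 / 2)) d := by
  have h0 : ∀ x : ℝ, psiG x = psiG 0 + ∫ u in (0:ℝ)..x, Real.exp (-u ^ 2 / 2) := by
    intro x
    have := intervalIntegral.integral_Iic_sub_Iic
      (f := fun u : ℝ => Real.exp (-u ^ 2 / 2)) (a := (0:ℝ)) (b := x)
      dens_integrable.integrableOn dens_integrable.integrableOn
    unfold psiG
    linarith [this]
  have hd : HasDerivAt (fun x => psiG 0 + ∫ u in (0:ℝ)..x, Real.exp (-u ^ 2 / 2))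
      (Real.exp (-d ^ 2 / 2)) d := by
    apply HasDerivAt.const_add
    exact intervalIntegral.integral_hasDerivAt_right
      dens_integrable.intervalIntegrable
      (dens_continuous.stronglyMeasurable.stronglyMeasurableAtFilter)
      dens_continuous.continuousAt
  exact hd.congr_of_eventuallyEq (Filter.Eventually.of_forall h0)

-- Mills-type bound
lemma mills (d : ℝ) (hd : d < 0) : -d * psiG d ≤ Real.exp (-d ^ 2 / 2) := by
  have hint : ∫ u in Set.Iic d, -u * Real.exp (-u ^ 2 / 2) = Real.exp (-d ^ 2 / 2) := by
    have := MeasureTheory.integral_Iic_of_hasDerivAt_of_tendsto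
      (f := fun u : ℝ => Real.exp (-u ^ 2 / 2)) (f' := fun u : ℝ => -u * Real.exp (-u ^ 2 / 2))
      (a := d) (m := 0)
      (dens_continuous.continuousWithinAt)
      (fun x _ => by
        have h1 : HasDerivAt (fun u : ℝ => -u ^ 2 / 2) (-x) x := by
          have := ((hasDerivAt_pow 2 x).neg).div_const 2
          exact (this.congr_deriv (by ring))
        exact (h1.exp).congr_deriv (by ring))
      ?_ ?_
    · simpa using this
    · -- integrability of -u * exp(-u^2/2) on Iic d
      have h := integrable_mul_exp_neg_mul_sq (b := (1:ℝ)/2) (by norm_num)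
      have heq : (fun u : ℝ => -u * Real.exp (-u ^ 2 / 2))
          = fun u : ℝ => -(u * Real.exp (-((1:ℝ)/2) * u ^ 2)) := by
        funext u; rw [neg_mul]; ring_nf
      have h2 : Integrable (fun u : ℝ => -u * Real.exp (-u ^ 2 / 2)) := by
        rw [heq]; exact h.neg
      exact h2.integrableOn
    · -- tendsto exp(-u^2/2) atBot 0
      apply squeeze_zero' (Filter.Eventually.of_forall fun u => (Real.exp_pos _).le)
        ?_ Real.tendsto_exp_atBot
      filter_upwards [Filter.Iic_mem_atBot (-2:ℝ)] with u hu
      apply Real.exp_le_exp.2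
      have hu' : u ≤ -2 := hu
      nlinarith [hu']
  have hmono : -d * psiG d ≤ ∫ u in Set.Iic d, -u * Real.exp (-u ^ 2 / 2) := by
    unfold psiG
    rw [← MeasureTheory.integral_const_mul]
    apply MeasureTheory.setIntegral_mono_on
    · exact (dens_integrable.const_mul _).integrableOn
    · have h := integrable_mul_exp_neg_mul_sq (b := (1:ℝ)/2) (by norm_num)
      have heq : (fun u : ℝ => -u * Real.exp (-u ^ 2 / 2))
          = fun u : ℝ => -(u * Real.exp (-((1:ℝ)/2) * u ^ 2)) := by
        funext u; rw [neg_mul]; ring_nf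
      have h2 : Integrable (fun u : ℝ => -u * Real.exp (-u ^ 2 / 2)) := by
        rw [heq]; exact h.neg
      exact h2.integrableOn
    · exact measurableSet_Iic
    · intro u hu
      have : -d ≤ -u := by simpa using (hu : u ≤ d)
      exact mul_le_mul_of_nonneg_right this (Real.exp_pos _).le
  linarith [hint, hmono]

lemma dens_hasDerivAt (d : ℝ) :
    HasDerivAt (fun u : ℝ => Real.exp (-u ^ 2 / 2)) (-d * Real.exp (-d ^ 2 / 2)) d := by
  have h1 : HasDerivAt (fun u : ℝ => -u ^ 2 / 2) (-d) d := by
    have := ((hasDerivAt_pow 2 d).neg).div_const 2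
    exact this.congr_deriv (by ring)
  exact (h1.exp).congr_deriv (by ring)

noncomputable def GN (d : ℝ) : ℝ := -Real.log ((Real.sqrt (2 * Real.pi))⁻¹ * psiG d)

lemma cN_pos : 0 < (Real.sqrt (2 * Real.pi))⁻¹ := by
  have : 0 < Real.sqrt (2 * Real.pi) := Real.sqrt_pos.2 (by positivity)
  positivity

lemma PhiN_pos (d : ℝ) : 0 < (Real.sqrt (2 * Real.pi))⁻¹ * psiG d :=
  mul_pos cN_pos (psiG_pos d)

lemma PhiN_hasDerivAt (d : ℝ) :
    HasDerivAt (fun x => (Real.sqrt (2 * Real.pi))⁻¹ * psiG x)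
      ((Real.sqrt (2 * Real.pi))⁻¹ * Real.exp (-d ^ 2 / 2)) d :=
  (psiG_hasDerivAt d).const_mul _

lemma GN_hasDerivAt (d : ℝ) :
    HasDerivAt GN
      (-(((Real.sqrt (2 * Real.pi))⁻¹ * Real.exp (-d ^ 2 / 2)) /
        ((Real.sqrt (2 * Real.pi))⁻¹ * psiG d))) d :=
  (HasDerivAt.log (PhiN_hasDerivAt d) (PhiN_pos d).ne').neg

noncomputable def GN1 (d : ℝ) : ℝ :=
  -(((Real.sqrt (2 * Real.pi))⁻¹ * Real.exp (-d ^ 2 / 2)) /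
    ((Real.sqrt (2 * Real.pi))⁻¹ * psiG d))

lemma GN1_hasDerivAt (d : ℝ) :
    HasDerivAt GN1
      (-((((Real.sqrt (2 * Real.pi))⁻¹ * (-d * Real.exp (-d ^ 2 / 2))) *
            ((Real.sqrt (2 * Real.pi))⁻¹ * psiG d) -
          ((Real.sqrt (2 * Real.pi))⁻¹ * Real.exp (-d ^ 2 / 2)) *
            ((Real.sqrt (2 * Real.pi))⁻¹ * Real.exp (-d ^ 2 / 2))) /
        ((Real.sqrt (2 * Real.pi))⁻¹ * psiG d) ^ 2)) d := by
  have hN : HasDerivAt (fun x => (Real.sqrt (2 * Real.pi))⁻¹ * Real.exp (-x ^ 2 / 2))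
      ((Real.sqrt (2 * Real.pi))⁻¹ * (-d * Real.exp (-d ^ 2 / 2))) d :=
    (dens_hasDerivAt d).const_mul _
  exact (hN.div (PhiN_hasDerivAt d) (PhiN_pos d).ne').neg

lemma GN_convex : ConvexOn ℝ Set.univ GN := by
  have hderiv : deriv GN = GN1 := funext fun d => (GN_hasDerivAt d).deriv
  apply convexOn_univ_of_deriv2_nonneg
  · exact fun d => (GN_hasDerivAt d).differentiableAt
  · rw [hderiv]; exact fun d => (GN1_hasDerivAt d).differentiableAt
  · intro d
    have : deriv^[2] GN d = deriv (deriv GN) d := by simp [Function.iterate_succ]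
    rw [this, hderiv, (GN1_hasDerivAt d).deriv]
    set c := (Real.sqrt (2 * Real.pi))⁻¹ with hc
    set N := Real.exp (-d ^ 2 / 2) with hN
    have hcpos : 0 < c := cN_pos
    have hNpos : 0 < N := Real.exp_pos _
    have hψ : 0 < psiG d := psiG_pos d
    have hkey : 0 ≤ (c * N) * (c * N) - (c * (-d * N)) * (c * psiG d) := by
      have : (c * N) * (c * N) - (c * (-d * N)) * (c * psiG d)
          = c ^ 2 * N * (N - (-d) * psiG d) := by ring
      rw [this]
      rcases le_or_gt 0 d with h | h
      · have : 0 ≤ N - (-d) * psiG d := by nlinarith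
        positivity
      · have := mills d h
        have : 0 ≤ N - (-d) * psiG d := by linarith
        positivity
    rw [neg_nonneg]
    apply div_nonpos_of_nonpos_of_nonneg
    · linarith
    · positivity


/-- Negative log of the standard Gaussian CDF composed with an affine map is
convex on ℝⁿ. -/
theorem neg_log_Phi_affine_convex (n : ℕ) (τ r : ℝ) (hr : 0 < r)
    (C : (Fin n → ℝ) →ₗ[ℝ] ℝ)
    (Φ : ℝ → ℝ)
    (hΦ : ∀ d, Φ d = (Real.sqrt (2 * Real.pi))⁻¹ * ∫ u in Set.Iic d, Real.exp (-u ^ 2 / 2)) :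
    ConvexOn ℝ Set.univ
      (fun x : Fin n → ℝ => -Real.log (Φ ((τ - C x) / Real.sqrt r))) := by
  have hG := GN_convex
  have hf : (fun x : Fin n → ℝ => -Real.log (Φ ((τ - C x) / Real.sqrt r)))
      = fun x => GN ((τ - C x) / Real.sqrt r) := by
    funext x
    simp [GN, psiG, hΦ]
  rw [hf]
  refine ⟨convex_univ, ?_⟩
  intro x _ y _ a b ha hb hab
  have hA : (τ - C (a • x + b • y)) / Real.sqrt r
      = a • ((τ - C x) / Real.sqrt r) + b • ((τ - C y) / Real.sqrt r) := by
    rw [map_add, _root_.map_smul, _root_.map_smul, smul_eq_mul, smul_eq_mul, smul_eq_mul, smul_eq_mul]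
    have hτ : τ - (a * C x + b * C y) = a * (τ - C x) + b * (τ - C y) := by
      have h1 : a * τ + b * τ = τ := by rw [← add_mul, hab, one_mul]
      ring_nf
      linarith
    rw [hτ, add_div, mul_div_assoc, mul_div_assoc]
  simp only [hA]
  exact hG.2 (Set.mem_univ _) (Set.mem_univ _) ha hb hab
end

section
/- If f : ℝ → (0,∞) is log-concave and integrable, then the function x ↦ ∫_{-∞}^x f(u) du is log-concave. -/
open MeasureTheory Set Real

/-- The lower CDF of a positive, integrable, log-concave function on ℝ is
log-concave (Prékopa's theorem, one-dimensional specialization). -/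
theorem cdf_of_log_concave_is_log_concave (f : ℝ → ℝ)
    (hf_pos : ∀ u, 0 < f u)
    (hf_lc : ConcaveOn ℝ Set.univ (fun u => Real.log (f u)))
    (hf_int : MeasureTheory.Integrable f) :
    (∀ x, 0 < ∫ u in Set.Iic x, f u) ∧
      ConcaveOn ℝ Set.univ (fun x => Real.log (∫ u in Set.Iic x, f u)) := by
  -- continuity of f
  have hlog_cont : Continuous fun u => Real.log (f u) := by
    have := hf_lc.continuousOn isOpen_univ
    rw [← continuousOn_univ]; exact this
  have hf_cont : Continuous f := by
    have : f = fun u => Real.exp (Real.log (f u)) := by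
      funext u; rw [Real.exp_log (hf_pos u)]
    rw [this]; exact Real.continuous_exp.comp hlog_cont
  set F : ℝ → ℝ := fun x => ∫ u in Set.Iic x, f u with hF
  -- positivity of F
  have hF_pos : ∀ x, 0 < F x := by
    intro x
    rw [hF]
    rw [setIntegral_pos_iff_support_of_nonneg_ae
      (Filter.Eventually.of_forall fun u => (hf_pos u).le) (hf_int.integrableOn)]
    have : Function.support f = Set.univ := by
      ext u; simp [Function.support, (hf_pos u).ne']
    rw [this, Set.univ_inter]
    simp [Real.volume_Iic]
  refine ⟨hF_pos, ?_⟩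
  -- key pointwise inequality from log-concavity
  have key_pt : ∀ u x y : ℝ, u ≤ x → x ≤ y → f y * f u ≤ f x * f (u + (y - x)) := by
    intro u x y hux hxy
    rcases eq_or_lt_of_le (hux.trans hxy) with h | h
    · have hux' : u = x := le_antisymm hux (h ▸ hxy)
      subst hux'; subst h; simp [mul_comm]
    · set a : ℝ := (y - x) / (y - u) with ha
      have hyu : (0:ℝ) < y - u := sub_pos.mpr h
      have ha0 : 0 ≤ a := div_nonneg (sub_nonneg.mpr hxy) hyu.le
      have ha1 : a ≤ 1 := by
        rw [ha, div_le_one hyu]; linarith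
      have hb0 : 0 ≤ 1 - a := by linarith
      have hab : a + (1 - a) = 1 := by ring
      have hx_comb : a * u + (1 - a) * y = x := by
        have hay : a * (y - u) = y - x := by rw [ha]; exact div_mul_cancel₀ _ hyu.ne'
        linear_combination (-1 : ℝ) * hay
      have hz_comb : (1 - a) * u + a * y = u + (y - x) := by
        have hay : a * (y - u) = y - x := by rw [ha]; exact div_mul_cancel₀ _ hyu.ne'
        linear_combination hay
      have h1 := hf_lc.2 (Set.mem_univ u) (Set.mem_univ y) ha0 hb0 hab
      have h2 := hf_lc.2 (Set.mem_univ u) (Set.mem_univ y) hb0 ha0 (by ring)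
      simp only [smul_eq_mul] at h1 h2
      rw [hx_comb] at h1
      rw [hz_comb] at h2
      have hsum : Real.log (f y) + Real.log (f u) ≤
          Real.log (f x) + Real.log (f (u + (y - x)))  := by linarith
      rw [← Real.log_mul (hf_pos y).ne' (hf_pos u).ne',
        ← Real.log_mul (hf_pos x).ne' (hf_pos (u + (y - x))).ne'] at hsum
      exact (Real.log_le_log_iff (mul_pos (hf_pos y) (hf_pos u))
        (mul_pos (hf_pos x) (hf_pos (u + (y - x))))).mp hsum
  -- translation identity
  have htrans : ∀ x d : ℝ, (∫ u in Set.Iic x, f (u + d)) = ∫ v in Set.Iic (x + d), f v := by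
    intro x d
    have h1 : (∫ u in Set.Iic x, f (u + d))
        = ∫ u, (Set.Iic (x + d)).indicator f (u + d) := by
      rw [← integral_indicator measurableSet_Iic]
      congr 1; funext u
      by_cases hu : u ≤ x
      · rw [Set.indicator_of_mem (Set.mem_Iic.mpr hu),
          Set.indicator_of_mem (Set.mem_Iic.mpr (by linarith))]
      · rw [Set.indicator_of_notMem (fun hc => hu (Set.mem_Iic.mp hc)),
          Set.indicator_of_notMem (fun hc => hu (by
            have := Set.mem_Iic.mp hc; exact le_of_add_le_add_right (by linarith)))]
    rw [h1, integral_add_right_eq_self ((Set.Iic (x + d)).indicator f) d,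
      integral_indicator measurableSet_Iic]
  -- key inequality : f y * F x ≤ f x * F y for x ≤ y
  have key : ∀ x y : ℝ, x ≤ y → f y * F x ≤ f x * F y := by
    intro x y hxy
    have h1 : f y * F x = ∫ u in Set.Iic x, f y * f u := by
      rw [hF, ← integral_const_mul]
    have ht := htrans x (y - x)
    rw [show x + (y - x) = y by ring] at ht
    have h2 : f x * F y = ∫ u in Set.Iic x, f x * f (u + (y - x)) := by
      show f x * (∫ u in Set.Iic y, f u) = _
      rw [← ht, ← integral_const_mul]
    rw [h1, h2]
    apply setIntegral_mono_on
    · exact (hf_int.integrableOn).const_mul _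
    · have : IntegrableOn (fun u => f (u + (y - x))) (Set.Iic x) := by
        have : Integrable (fun u => f (u + (y - x))) := by
          exact hf_int.comp_add_right (y - x)
        exact this.integrableOn
      exact this.const_mul _
    · exact measurableSet_Iic
    · intro u hu
      exact key_pt u x y (Set.mem_Iic.mp hu) hxy
  -- F has derivative f x at x
  have hF_deriv : ∀ x, HasDerivAt F (f x) x := by
    intro x
    have hrepr : ∀ z : ℝ, F z = F 0 + ∫ u in (0:ℝ)..z, f u := by
      intro z
      rw [← intervalIntegral.integral_Iic_sub_Iic hf_int.integrableOn hf_int.integrableOn]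
      simp only [hF]; ring
    have hd : HasDerivAt (fun z => F 0 + ∫ u in (0:ℝ)..z, f u) (f x) x := by
      apply HasDerivAt.const_add
      exact intervalIntegral.integral_hasDerivAt_right
        hf_int.intervalIntegrable
        hf_cont.aestronglyMeasurable.stronglyMeasurableAtFilter
        hf_cont.continuousAt
    exact hd.congr_of_eventuallyEq (Filter.Eventually.of_forall hrepr)
  -- derivative of log F
  have hG_deriv : ∀ x, HasDerivAt (fun z => Real.log (F z)) (f x / F x) x := by
    intro x
    exact (hF_deriv x).log (hF_pos x).ne'
  have hderiv_eq : ∀ x, deriv (fun z => Real.log (F z)) x = f x / F x :=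
    fun x => (hG_deriv x).deriv
  have hanti : AntitoneOn (deriv fun z => Real.log (F z)) (interior Set.univ) := by
    intro x _ y _ hxy
    rw [hderiv_eq, hderiv_eq]
    rw [div_le_div_iff₀ (hF_pos y) (hF_pos x)]
    have := key x y hxy
    nlinarith [hF_pos x, hF_pos y]
  have := AntitoneOn.concaveOn_of_deriv (convex_univ) (f := fun z => Real.log (F z))
    (fun x _ => ((hG_deriv x).continuousAt).continuousWithinAt)
    (fun x _ => ((hG_deriv x).differentiableAt).differentiableWithinAt)
    hanti
  exact this
end
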